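/- Let Σ be an all-orthogonal core tensor with strictly positive, pairwise distinct mode-n singular values for each mode n, and suppose Σ' = (⊗ₙ V⁽ⁿ⁾)Σ is also all-orthogonal with ordered mode-n singular values, where V⁽ⁿ⁾ are unitary. Then each V⁽ⁿ⁾ is a diagonal unitary matrix. -/

import Mathlib

/-!
Both `Σ` and `Σ'` have diagonal mode-`n` Gram matrices, and matricization turns `Σ' = (⊗ₘ V⁽ᵐ⁾)Σ`
into `Σ'₍ₙ₎ = V⁽ⁿ⁾ Σ₍ₙ₎ W` with `W` unitary, so `diag(σ'²) = V⁽ⁿ⁾ diag(σ²) V⁽ⁿ⁾ᴴ`. Hence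
`V⁽ⁿ⁾ diag(σ²) = diag(σ'²) V⁽ⁿ⁾`: an entry `V⁽ⁿ⁾ j l` can be nonzero only if `σ'_j = σ_l`. As the
`σ_l` are distinct, each row of `V⁽ⁿ⁾` has its nonzero entries in a single column `f j`, and `f` is
onto by unitarity; comparing the orderings of `σ` and `σ'` makes `f` monotone, so `f = id`.
-/

open Matrix BigOperators

noncomputable section

/-- The full Kronecker (tensor) product `⊗ₙ U⁽ⁿ⁾` of the local matrices, as a matrix
on the product index set. -/
def kronFull {N : ℕ} {I : Fin N → ℕ} (U : ∀ n, Matrix (Fin (I n)) (Fin (I n)) ℂ) :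
    Matrix (∀ n, Fin (I n)) (∀ n, Fin (I n)) ℂ :=
  Matrix.of fun x y => ∏ n, U n (x n) (y n)

/-- The action of a local operator `⊗ₙ U⁽ⁿ⁾` on a tensor `T ∈ ℂ^{I₁}⊗⋯⊗ℂ^{I_N}`. -/
def locAct {N : ℕ} {I : Fin N → ℕ} (U : ∀ n, Matrix (Fin (I n)) (Fin (I n)) ℂ)
    (T : (∀ n, Fin (I n)) → ℂ) : (∀ n, Fin (I n)) → ℂ :=
  fun x => ∑ y : ∀ n, Fin (I n), (∏ n, U n (x n) (y n)) * T y

/-- Assemble a full multi-index from the value `i` of the `n`-th index and the values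
`c` of the remaining indices. -/
def assemble {N : ℕ} {I : Fin N → ℕ} (n : Fin N) (i : Fin (I n))
    (c : ∀ k : {k : Fin N // k ≠ n}, Fin (I k.1)) : ∀ m, Fin (I m) :=
  fun m => if h : m = n then cast (show Fin (I n) = Fin (I m) by rw [h]) i else c ⟨m, h⟩

/-- The mode-`n` matrix unfolding of a tensor (columns indexed by the remaining indices). -/
def unfold {N : ℕ} {I : Fin N → ℕ} (n : Fin N) (T : (∀ m, Fin (I m)) → ℂ) :
    Matrix (Fin (I n)) (∀ k : {k : Fin N // k ≠ n}, Fin (I k.1)) ℂ :=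
  Matrix.of fun i c => T (assemble n i c)

/-- The Hermitian inner product `⟨T_{i_n=i}, T'_{i_n=j}⟩` of mode-`n` slices. -/
def modeInner {N : ℕ} {I : Fin N → ℕ} (n : Fin N) (T T' : (∀ m, Fin (I m)) → ℂ)
    (i j : Fin (I n)) : ℂ :=
  ∑ c : ∀ k : {k : Fin N // k ≠ n}, Fin (I k.1),
    star (T (assemble n i c)) * T' (assemble n j c)

/-- `T` is all-orthogonal with ordered mode-`n` singular values `σ n`. -/
def AllOrth {N : ℕ} {I : Fin N → ℕ} (σ : ∀ n, Fin (I n) → ℝ)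
    (T : (∀ m, Fin (I m)) → ℂ) : Prop :=
  (∀ n, Antitone (σ n)) ∧ (∀ n i, 0 ≤ σ n i) ∧
    ∀ n i j, modeInner n T T i j = if i = j then ((σ n i : ℂ)) ^ 2 else 0

/-- Squared Frobenius norm of a tensor. -/
def fnormSq {N : ℕ} {I : Fin N → ℕ} (T : (∀ m, Fin (I m)) → ℂ) : ℝ :=
  ∑ x, Complex.normSq (T x)

theorem eq_id_of_monotone_of_surjective {ι : Type*} [LinearOrder ι] [Finite ι] {f : ι → ι}
    (hmono : Monotone f) (hsurj : Function.Surjective f) : f = id :=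
  have hf : StrictMono f :=
    hmono.strictMono_of_injective (Finite.injective_iff_surjective.mpr hsurj)
  congrArg DFunLike.coe (Subsingleton.elim (hf.orderIsoOfSurjective f hsurj) (OrderIso.refl ι))

namespace Matrix

section Kronecker

variable {κ : Type*} [Fintype κ] {ι : κ → Type*} {R : Type*}

def piKron [CommMonoid R] (U : ∀ k, Matrix (ι k) (ι k) R) : Matrix (∀ k, ι k) (∀ k, ι k) R :=
  of fun x y => ∏ k, U k (x k) (y k)

theorem piKron_one [CommSemiring R] [∀ k, DecidableEq (ι k)] :
    piKron (fun k => (1 : Matrix (ι k) (ι k) R)) = 1 := by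
  ext x y
  simp only [piKron, of_apply, one_apply]
  by_cases h : x = y
  · simp [h]
  · obtain ⟨k, hk⟩ := Function.ne_iff.mp h
    rw [if_neg h]
    exact Finset.prod_eq_zero (Finset.mem_univ k) (by simp [hk])

theorem conjTranspose_piKron [CommSemiring R] [StarRing R] (U : ∀ k, Matrix (ι k) (ι k) R) :
    (piKron U)ᴴ = piKron fun k => (U k)ᴴ := by
  ext x y
  simp [piKron]

variable [∀ k, Fintype (ι k)]

theorem piKron_mul [CommSemiring R] [DecidableEq κ] (A B : ∀ k, Matrix (ι k) (ι k) R) :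
    piKron A * piKron B = piKron fun k => A k * B k := by
  ext x z
  simp only [piKron, mul_apply, of_apply, ← Finset.prod_mul_distrib]
  exact (Fintype.prod_sum fun k j => A k (x k) j * B k j (z k)).symm

theorem piKron_mem_unitaryGroup [CommRing R] [StarRing R] [DecidableEq κ]
    [∀ k, DecidableEq (ι k)] {U : ∀ k, Matrix (ι k) (ι k) R}
    (hU : ∀ k, U k ∈ unitaryGroup (ι k) R) : piKron U ∈ unitaryGroup (∀ k, ι k) R := by
  rw [mem_unitaryGroup_iff, star_eq_conjTranspose, conjTranspose_piKron, piKron_mul]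
  simp_rw [← star_eq_conjTranspose, fun k => mem_unitaryGroup_iff.mp (hU k)]
  exact piKron_one

end Kronecker

section Unitary

variable {ι α : Type*} [Fintype ι] [DecidableEq ι] [CommRing α] [StarRing α] [Nontrivial α]

theorem exists_apply_ne_zero_of_mem_unitaryGroup {U : Matrix ι ι α}
    (hU : U ∈ unitaryGroup ι α) (i : ι) : ∃ j, U i j ≠ 0 := by
  by_contra! h
  have hii := congr_fun₂ (mem_unitaryGroup_iff.mp hU) i i
  simp [mul_apply, h] at hii

theorem exists_apply_ne_zero_of_mem_unitaryGroup' {U : Matrix ι ι α}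
    (hU : U ∈ unitaryGroup ι α) (j : ι) : ∃ i, U i j ≠ 0 :=
  exists_apply_ne_zero_of_mem_unitaryGroup (transpose_mem_unitaryGroup_iff.mpr hU) j

end Unitary

theorem isDiag_of_mul_diagonal_eq_diagonal_mul {ι 𝕜 : Type*} [Fintype ι] [LinearOrder ι]
    [RCLike 𝕜] {U : Matrix ι ι 𝕜} (hU : U ∈ unitaryGroup ι 𝕜) {a b : ι → ℝ}
    (ha : StrictAnti a) (hb : Antitone b)
    (h : U * diagonal (fun i => (a i : 𝕜)) = diagonal (fun i => (b i : 𝕜)) * U) : U.IsDiag := by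
  have hentry : ∀ i j, U i j ≠ 0 → b i = a j := by
    intro i j hij
    have hij' := congr_fun₂ h i j
    rw [mul_diagonal, diagonal_mul, mul_comm] at hij'
    exact_mod_cast (mul_right_cancel₀ hij hij').symm
  choose f hf using exists_apply_ne_zero_of_mem_unitaryGroup hU
  have hf_unique : ∀ i j, U i j ≠ 0 → j = f i := fun i j hij =>
    ha.injective ((hentry i j hij).symm.trans (hentry i (f i) (hf i)))
  have hf_surj : Function.Surjective f := fun j =>
    (exists_apply_ne_zero_of_mem_unitaryGroup' hU j).imp fun i hij => (hf_unique i j hij).symm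
  have hf_mono : Monotone f := fun i i' hii' => by
    rw [← StrictAnti.le_iff_ge ha, ← hentry i (f i) (hf i), ← hentry i' (f i') (hf i')]
    exact hb hii'
  have hf_id := eq_id_of_monotone_of_surjective hf_mono hf_surj
  intro i j hij
  by_contra hne
  exact hij ((hf_unique i j hne).trans (congrFun hf_id i)).symm

end Matrix

section Unfolding

variable {N : ℕ} {I : Fin N → ℕ} (n : Fin N)

theorem assemble_eq_piSplitAt_symm (i : Fin (I n)) (c : ∀ k : {k : Fin N // k ≠ n}, Fin (I k.1)) :
    assemble n i c = (Equiv.piSplitAt n fun m => Fin (I m)).symm (i, c) := by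
  funext m
  by_cases h : m = n
  · subst h
    simp [assemble, Equiv.piSplitAt]
  · simp [assemble, Equiv.piSplitAt, h]

theorem assemble_apply_self (i : Fin (I n)) (c : ∀ k : {k : Fin N // k ≠ n}, Fin (I k.1)) :
    assemble n i c n = i := by
  simp [assemble]

theorem assemble_apply_coe (i : Fin (I n)) (c : ∀ k : {k : Fin N // k ≠ n}, Fin (I k.1))
    (k : {k : Fin N // k ≠ n}) : assemble n i c k = c k :=
  dif_neg k.2

theorem sum_eq_sum_assemble {M : Type*} [AddCommMonoid M] (F : (∀ m, Fin (I m)) → M) :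
    ∑ x, F x = ∑ i, ∑ c, F (assemble n i c) := by
  rw [← (Equiv.piSplitAt n fun m => Fin (I m)).symm.sum_comp, Fintype.sum_prod_type]
  simp_rw [assemble_eq_piSplitAt_symm]

theorem unfold_locAct (U : ∀ m, Matrix (Fin (I m)) (Fin (I m)) ℂ) (T : (∀ m, Fin (I m)) → ℂ) :
    unfold n (locAct U T) = U n * unfold n T * piKron fun k : {k // k ≠ n} => (U k)ᵀ := by
  ext i c
  simp only [unfold, locAct, mul_apply, of_apply, piKron, transpose_apply]
  rw [sum_eq_sum_assemble n, Finset.sum_comm]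
  refine Finset.sum_congr rfl fun d _ => ?_
  rw [Finset.sum_mul]
  refine Finset.sum_congr rfl fun k _ => ?_
  rw [Fintype.prod_eq_mul_prod_subtype_ne _ n]
  simp only [assemble_apply_self, assemble_apply_coe]
  ring

def modeGram (T : (∀ m, Fin (I m)) → ℂ) : Matrix (Fin (I n)) (Fin (I n)) ℂ :=
  unfold n T * (unfold n T)ᴴ

theorem modeGram_apply (T : (∀ m, Fin (I m)) → ℂ) (i j : Fin (I n)) :
    modeGram n T i j = modeInner n T T j i := by
  simp [modeGram, modeInner, unfold, mul_apply, mul_comm]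

theorem modeGram_locAct {U : ∀ m, Matrix (Fin (I m)) (Fin (I m)) ℂ}
    (hU : ∀ m, U m ∈ unitaryGroup (Fin (I m)) ℂ) (T : (∀ m, Fin (I m)) → ℂ) :
    modeGram n (locAct U T) = U n * modeGram n T * (U n)ᴴ := by
  have hW := mem_unitaryGroup_iff.mp <| piKron_mem_unitaryGroup
    fun k : {k // k ≠ n} => transpose_mem_unitaryGroup_iff.mpr (hU k)
  rw [star_eq_conjTranspose] at hW
  simp only [modeGram, unfold_locAct, conjTranspose_mul, Matrix.mul_assoc]
  rw [← Matrix.mul_assoc (piKron _), hW, Matrix.one_mul]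

theorem modeGram_eq_diagonal {σ : ∀ m, Fin (I m) → ℝ} {T : (∀ m, Fin (I m)) → ℂ}
    (hT : AllOrth σ T) : modeGram n T = diagonal fun i => ((σ n i ^ 2 : ℝ) : ℂ) := by
  ext i j
  rw [modeGram_apply, hT.2.2, diagonal_apply]
  by_cases h : i = j
  · subst h
    simp
  · simp [h, Ne.symm h]

end Unfolding

theorem stmt18_general {N : ℕ} {I : Fin N → ℕ} (T : (∀ n, Fin (I n)) → ℂ)
    (σ : ∀ n, Fin (I n) → ℝ) (hσ : AllOrth σ T)
    (hstrict : ∀ n, StrictAnti (σ n))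
    (V : ∀ n, Matrix (Fin (I n)) (Fin (I n)) ℂ)
    (hV : ∀ n, V n ∈ Matrix.unitaryGroup (Fin (I n)) ℂ)
    (σ' : ∀ n, Fin (I n) → ℝ) (hσ' : AllOrth σ' (locAct V T)) :
    ∀ n : Fin N, ∃ d : Fin (I n) → ℂ, V n = Matrix.diagonal d := by
  intro n
  have hsim := modeGram_locAct n hV T
  rw [modeGram_eq_diagonal n hσ, modeGram_eq_diagonal n hσ'] at hsim
  have hcomm : V n * diagonal (fun i => ((σ n i ^ 2 : ℝ) : ℂ)) =
      diagonal (fun i => ((σ' n i ^ 2 : ℝ) : ℂ)) * V n := by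
    rw [hsim, Matrix.mul_assoc, Matrix.mul_assoc, ← star_eq_conjTranspose,
      mem_unitaryGroup_iff'.mp (hV n), Matrix.mul_one]
  have hsq_anti : StrictAnti fun i => σ n i ^ 2 := fun i j hij =>
    pow_lt_pow_left₀ (hstrict n hij) (hσ.2.1 n j) two_ne_zero
  have hsq_anti' : Antitone fun i => σ' n i ^ 2 := fun i j hij =>
    pow_le_pow_left₀ (hσ'.2.1 n j) (hσ'.1 n hij) 2
  exact ⟨(V n).diag,
    (isDiag_of_mul_diagonal_eq_diagonal_mul (hV n) hsq_anti hsq_anti' hcomm).diagonal_diag.symm⟩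

/-- If `Σ` is all-orthogonal with strictly positive, pairwise distinct mode-`n`
singular values, and `Σ' = (⊗ₙ V⁽ⁿ⁾)Σ` is also all-orthogonal with ordered mode-`n` singular
values for unitaries `V⁽ⁿ⁾`, then each `V⁽ⁿ⁾` is diagonal. -/
theorem stmt18 {N : ℕ} {I : Fin N → ℕ} (T : (∀ n, Fin (I n)) → ℂ)
    (σ : ∀ n, Fin (I n) → ℝ) (hσ : AllOrth σ T)
    (hstrict : ∀ n, StrictAnti (σ n)) (hpos : ∀ n i, 0 < σ n i)
    (V : ∀ n, Matrix (Fin (I n)) (Fin (I n)) ℂ)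
    (hV : ∀ n, V n ∈ Matrix.unitaryGroup (Fin (I n)) ℂ)
    (σ' : ∀ n, Fin (I n) → ℝ) (hσ' : AllOrth σ' (locAct V T)) :
    ∀ n : Fin N, ∃ d : Fin (I n) → ℂ, V n = Matrix.diagonal d :=
  stmt18_general T σ hσ hstrict V hV σ' hσ'
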